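/- For every natural number d, C(d,6) = (360/360)·L_d(2) − (224/240)·L_d(3) + (85/180)·L_d(4) − (15/144)·L_d(5) + (1/120)·L_d(6) as rational numbers (the denominators being 6·5·4·3 = 360, 6·5·4·2! = 240, 6·5·3! = 180, 6·4! = 144, 5! = 120), where L_d(w) = (1/w)·Σ_{r ∣ w} μ(r)·d^{w/r} is the Witt number. -/

import Mathlib

/-! For the weights `w ≤ 6` the divisor sum defining `L_d(w)` has at most four nonzero terms, so
each Witt number is an explicit polynomial in `d` divided by `w`, while
`6! · C(d, 6) = d (d - 1) ⋯ (d - 5)`; the claim is then a polynomial identity in `d`. -/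

/-- The Witt number `L_d(w) = (1/w) * Σ_{r ∣ w} μ(r) * d^(w/r)`, as a rational number. -/
def witt (d w : ℕ) : ℚ :=
  (1 / w : ℚ) * ∑ r ∈ w.divisors, (ArithmeticFunction.moebius r : ℚ) * (d : ℚ) ^ (w / r)

open Finset ArithmeticFunction

theorem factorial_mul_choose_eq_prod_range {R : Type*} [CommRing R] (n k : ℕ) :
    (k.factorial * n.choose k : R) = ∏ j ∈ range k, ((n : R) - j) := by
  rw [← descPochhammer_eval_eq_prod_range, descPochhammer_eval_eq_descFactorial,
    Nat.descFactorial_eq_factorial_mul_choose, Nat.cast_mul]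

theorem sum_divisors_mul_of_coprime {M : Type*} [AddCommMonoid M] {m n : ℕ} (h : m.Coprime n)
    (f : ℕ → M) : ∑ x ∈ (m * n).divisors, f x = ∑ a ∈ m.divisors, ∑ b ∈ n.divisors, f (a * b) := by
  rw [h.divisors_mul, sum_map]
  exact (sum_attach _ (fun p => f (p.1 * p.2))).trans (sum_product _ _ _)

theorem witt_prime_pow_succ {p : ℕ} (hp : p.Prime) (d k : ℕ) :
    witt d (p ^ (k + 1)) = ((d : ℚ) ^ p ^ (k + 1) - (d : ℚ) ^ p ^ k) / p ^ (k + 1) := by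
  have hμ : ∀ i ∈ range k,
      (moebius (p ^ (i + 2)) : ℚ) * (d : ℚ) ^ (p ^ (k + 1) / p ^ (i + 2)) = 0 :=
    fun i _ => by rw [moebius_apply_prime_pow hp (by omega)]; simp
  rw [witt, Nat.sum_divisors_prime_pow hp, sum_range_succ', sum_range_succ', sum_eq_zero hμ]
  simp only [zero_add, pow_zero, pow_one, moebius_apply_one, moebius_apply_prime hp, Nat.div_one,
    pow_succ p k, Nat.mul_div_cancel _ hp.pos]
  push_cast
  ring

theorem witt_prime {p : ℕ} (hp : p.Prime) (d : ℕ) : witt d p = ((d : ℚ) ^ p - d) / p := by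
  simpa using witt_prime_pow_succ hp d 0

theorem witt_mul_of_prime {p q : ℕ} (hp : p.Prime) (hq : q.Prime) (hpq : p ≠ q) (d : ℕ) :
    witt d (p * q) = ((d : ℚ) ^ (p * q) - (d : ℚ) ^ p - (d : ℚ) ^ q + d) / (p * q) := by
  have hcop : p.Coprime q := (Nat.coprime_primes hp hq).2 hpq
  rw [witt, sum_divisors_mul_of_coprime hcop, hp.divisors, hq.divisors, sum_pair hp.one_lt.ne]
  simp only [sum_pair hq.one_lt.ne, one_mul, mul_one,
    isMultiplicative_moebius.map_mul_of_coprime hcop,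
    moebius_apply_prime hp, moebius_apply_prime hq, Nat.div_one, Nat.mul_div_cancel _ hq.pos,
    Nat.mul_div_cancel_left _ hp.pos, Nat.div_self (Nat.mul_pos hp.pos hq.pos), moebius_apply_one]
  push_cast
  ring

/-- C(d,6) = (360/360)·L_d(2) − (224/240)·L_d(3) + (85/180)·L_d(4) − (15/144)·L_d(5) + (1/120)·L_d(6). -/
theorem choose_six_eq (d : ℕ) :
    (d.choose 6 : ℚ) =
      (360 / 360) * witt d 2 - (224 / 240) * witt d 3 + (85 / 180) * witt d 4
        - (15 / 144) * witt d 5 + (1 / 120) * witt d 6 := by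
  have hchoose := factorial_mul_choose_eq_prod_range (R := ℚ) d 6
  have h4 := witt_prime_pow_succ Nat.prime_two d 1
  have h6 := witt_mul_of_prime Nat.prime_two Nat.prime_three (by norm_num) d
  rw [witt_prime Nat.prime_two, witt_prime Nat.prime_three, witt_prime Nat.prime_five]
  norm_num [prod_range_succ, Nat.factorial] at hchoose h4 h6 ⊢
  rw [h4, h6]
  linear_combination hchoose / 720
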